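/- arXiv:1308.2607 — 6 statements merged into one kernel-verified Lean document; each statement's English description precedes it below -/
import Mathlib

section
/- Let 1/2 < x < 1 and r = x/(1-x) > 1. For the geometric distribution rho_i proportional to r^i on states 0,...,K, the magnetization m(K) = (sum_{i=0}^{K} i * r^i) / (K * sum_{i=0}^{K} r^i) is strictly increasing in K for K >= 1. -/
open Finset

/-- `(x-1) * ∑ i*x^i = n*x^(n+1) - (∑ x^i) + 1`. -/
lemma sum_weighted_geom_id (x : ℝ) (n : ℕ) :
    (x - 1) * ∑ i ∈ Finset.range (n + 1), (i : ℝ) * x ^ i =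
      (n : ℝ) * x ^ (n + 1) - (∑ i ∈ Finset.range (n + 1), x ^ i) + 1 := by
  induction n with
  | zero => simp
  | succ n ih =>
    rw [Finset.sum_range_succ, Finset.sum_range_succ (fun i => x ^ i)]
    push_cast
    push_cast at ih
    linear_combination ih

lemma pair_ineq (q : ℝ) (hq0 : 0 < q) (K i j : ℕ) (hi : i ≤ K) (hj : j ≤ K) :
    2 * q ^ K ≤ q ^ i * q ^ j + q ^ (K - i) * q ^ (K - j) := by
  have h1 : q ^ i * q ^ (K - i) = q ^ K := by
    rw [← pow_add, Nat.add_sub_cancel' hi]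
  have h2 : q ^ j * q ^ (K - j) = q ^ K := by
    rw [← pow_add, Nat.add_sub_cancel' hj]
  have ha : 0 < q ^ i * q ^ j := by positivity
  have hb : 0 < q ^ (K - i) * q ^ (K - j) := by positivity
  have hab : (q ^ i * q ^ j) * (q ^ (K - i) * q ^ (K - j)) = q ^ K * q ^ K := by
    rw [show (q ^ i * q ^ j) * (q ^ (K - i) * q ^ (K - j))
        = (q ^ i * q ^ (K - i)) * (q ^ j * q ^ (K - j)) by ring, h1, h2]
  nlinarith [sq_nonneg (q ^ i * q ^ j - q ^ (K - i) * q ^ (K - j)), pow_pos hq0 K]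

lemma sq_sum_geom_gt (q : ℝ) (hq : 1 < q) (K : ℕ) (hK : 1 ≤ K) :
    ((K : ℝ) + 1) ^ 2 * q ^ K < (∑ i ∈ Finset.range (K + 1), q ^ i) ^ 2 := by
  have hq0 : (0:ℝ) < q := by linarith
  have hrev : ∑ i ∈ Finset.range (K + 1), q ^ (K - i)
      = ∑ i ∈ Finset.range (K + 1), q ^ i := by
    simpa using Finset.sum_range_reflect (fun i => q ^ i) (K + 1)
  have hdouble : 2 * (∑ i ∈ Finset.range (K + 1), q ^ i) ^ 2
      = ∑ i ∈ Finset.range (K + 1), ∑ j ∈ Finset.range (K + 1),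
          (q ^ i * q ^ j + q ^ (K - i) * q ^ (K - j)) := by
    have e1 : (∑ i ∈ Finset.range (K + 1), q ^ i) * (∑ j ∈ Finset.range (K + 1), q ^ j)
        = ∑ i ∈ Finset.range (K + 1), ∑ j ∈ Finset.range (K + 1), q ^ i * q ^ j :=
      Finset.sum_mul_sum _ _ _ _
    have e2 : (∑ i ∈ Finset.range (K + 1), q ^ (K - i))
          * (∑ j ∈ Finset.range (K + 1), q ^ (K - j))
        = ∑ i ∈ Finset.range (K + 1), ∑ j ∈ Finset.range (K + 1),
            q ^ (K - i) * q ^ (K - j) :=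
      Finset.sum_mul_sum _ _ _ _
    calc 2 * (∑ i ∈ Finset.range (K + 1), q ^ i) ^ 2
        = (∑ i ∈ Finset.range (K + 1), q ^ i) * (∑ j ∈ Finset.range (K + 1), q ^ j)
          + (∑ i ∈ Finset.range (K + 1), q ^ (K - i))
            * (∑ j ∈ Finset.range (K + 1), q ^ (K - j)) := by
          rw [hrev]; ring
      _ = (∑ i ∈ Finset.range (K + 1), ∑ j ∈ Finset.range (K + 1), q ^ i * q ^ j)
          + ∑ i ∈ Finset.range (K + 1), ∑ j ∈ Finset.range (K + 1),
              q ^ (K - i) * q ^ (K - j) := by rw [e1, e2]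
      _ = ∑ i ∈ Finset.range (K + 1), ∑ j ∈ Finset.range (K + 1),
            (q ^ i * q ^ j + q ^ (K - i) * q ^ (K - j)) := by
          rw [← Finset.sum_add_distrib]
          refine Finset.sum_congr rfl fun i _ => ?_
          rw [← Finset.sum_add_distrib]
  have hconst : ∑ _i ∈ Finset.range (K + 1), ∑ _j ∈ Finset.range (K + 1), (2 * q ^ K)
      = 2 * (((K : ℝ) + 1) ^ 2 * q ^ K) := by
    simp [Finset.sum_const, Finset.card_range, nsmul_eq_mul]
    push_cast
    ring
  have hqK : 1 < q ^ K := one_lt_pow₀ hq (by omega)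
  have hlt : ∑ _i ∈ Finset.range (K + 1), ∑ _j ∈ Finset.range (K + 1), (2 * q ^ K)
      < ∑ i ∈ Finset.range (K + 1), ∑ j ∈ Finset.range (K + 1),
          (q ^ i * q ^ j + q ^ (K - i) * q ^ (K - j)) := by
    apply Finset.sum_lt_sum
    · intro i hi
      apply Finset.sum_le_sum
      intro j hj
      exact pair_ineq q hq0 K i j (by simpa using Nat.lt_succ_iff.mp (Finset.mem_range.mp hi))
        (by simpa using Nat.lt_succ_iff.mp (Finset.mem_range.mp hj))
    · refine ⟨0, Finset.mem_range.mpr (by omega), ?_⟩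
      apply Finset.sum_lt_sum
      · intro j hj
        exact pair_ineq q hq0 K 0 j (by omega)
          (Nat.lt_succ_iff.mp (Finset.mem_range.mp hj))
      · refine ⟨0, Finset.mem_range.mpr (by omega), ?_⟩
        simp only [pow_zero, Nat.sub_zero, one_mul]
        nlinarith [sq_nonneg (q ^ K - 1)]
  rw [hconst] at hlt
  rw [← hdouble] at hlt
  linarith

set_option maxHeartbeats 1000000 in
theorem geometric_magnetization_increasing (x r : ℝ)
    (hx : 1 / 2 < x) (hx1 : x < 1) (hr : r = x / (1 - x))
    (K : ℕ) (hK : 1 ≤ K) :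
    (∑ i ∈ Finset.range (K + 1), (i : ℝ) * r ^ i) /
        ((K : ℝ) * ∑ i ∈ Finset.range (K + 1), r ^ i) <
      (∑ i ∈ Finset.range (K + 2), (i : ℝ) * r ^ i) /
        (((K : ℝ) + 1) * ∑ i ∈ Finset.range (K + 2), r ^ i) := by
  have hx0 : 0 < 1 - x := by linarith
  have hr1 : 1 < r := by
    rw [hr, lt_div_iff₀ hx0]; linarith
  have hr0 : (0:ℝ) < r := by linarith
  have hrm1 : (0:ℝ) < r - 1 := by linarith
  have hK0 : (0:ℝ) < (K : ℝ) := by exact_mod_cast Nat.lt_of_lt_of_le Nat.zero_lt_one hK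
  have hsplit : K + 2 = (K + 1) + 1 := by omega
  rw [hsplit, Finset.sum_range_succ (fun i => (i : ℝ) * r ^ i) (K + 1),
    Finset.sum_range_succ (fun i => r ^ i) (K + 1)]
  push_cast
  set S : ℝ := ∑ i ∈ Finset.range (K + 1), r ^ i with hSdef
  set T : ℝ := ∑ i ∈ Finset.range (K + 1), (i : ℝ) * r ^ i with hTdef
  have hSpos : 0 < S := Finset.sum_pos (fun i _ => pow_pos hr0 i)
    ⟨0, Finset.mem_range.mpr (by omega)⟩
  have hgeom : (r - 1) * S = r ^ (K + 1) - 1 := by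
    have := geom_sum_mul r (K + 1)
    rw [hSdef]; linarith [this]
  have hTid : (r - 1) * T = (K : ℝ) * r ^ (K + 1) - S + 1 := sum_weighted_geom_id r K
  have hC' : ((K : ℝ) + 1) ^ 2 * r ^ K < S ^ 2 := sq_sum_geom_gt r hr1 K hK
  have hC : ((K : ℝ) + 1) ^ 2 * (r - 1) ^ 2 * r ^ K < (r ^ (K + 1) - 1) ^ 2 := by
    have h1 : (r ^ (K + 1) - 1) ^ 2 = (r - 1) ^ 2 * S ^ 2 := by
      rw [← hgeom]; ring
    rw [h1]
    have h2 : (0:ℝ) < (r - 1) ^ 2 := by positivity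
    nlinarith [mul_lt_mul_of_pos_left hC' h2]
  -- explicit forms
  have hSe : S = (r ^ (K + 1) - 1) / (r - 1) := by
    field_simp
    linarith [hgeom]
  have hTe : T = ((K : ℝ) * r ^ (K + 1) - S + 1) / (r - 1) := by
    field_simp
    linarith [hTid]
  have hI : (r - 1) ^ 3 * ((K : ℝ) * ((K : ℝ) + 1) * r ^ (K + 1) * S - T * S
        - ((K : ℝ) + 1) * T * r ^ (K + 1))
      = r * ((r ^ (K + 1) - 1) ^ 2 - ((K : ℝ) + 1) ^ 2 * (r - 1) ^ 2 * r ^ K) := by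
    rw [hTe, hSe]
    field_simp
    ring
  have hD : 0 < (K : ℝ) * ((K : ℝ) + 1) * r ^ (K + 1) * S - T * S
      - ((K : ℝ) + 1) * T * r ^ (K + 1) := by
    have hpos : 0 < r * ((r ^ (K + 1) - 1) ^ 2 - ((K : ℝ) + 1) ^ 2 * (r - 1) ^ 2 * r ^ K) :=
      mul_pos hr0 (by linarith)
    nlinarith [hpos, hI, pow_pos hrm1 3]
  rw [div_lt_div_iff₀ (by positivity) (by positivity)]
  nlinarith [hD]
end

section
/- Let 1/2 < x < 1, r = x/(1-x), and K >= 2. Then the magnetization m(K) = (sum_{i=0}^{K} i * r^i)/(K * sum_{i=0}^{K} r^i) of the geometric distribution with ratio r is strictly greater than x. -/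
theorem geometric_magnetization_gt_x (x r : ℝ)
    (hx : 1 / 2 < x) (hx1 : x < 1) (hr : r = x / (1 - x))
    (K : ℕ) (hK : 2 ≤ K) :
    x < (∑ i ∈ Finset.range (K + 1), (i : ℝ) * r ^ i) /
        ((K : ℝ) * ∑ i ∈ Finset.range (K + 1), r ^ i) := by
  have h1x : 0 < 1 - x := by linarith
  have hr1 : 1 < r := by
    rw [hr, lt_div_iff₀ h1x]; linarith
  have hr0 : 0 < r := by linarith
  set S0 := ∑ i ∈ Finset.range (K + 1), r ^ i with hS0
  set S1 := ∑ i ∈ Finset.range (K + 1), (i : ℝ) * r ^ i with hS1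
  have hS0pos : 0 < S0 :=
    Finset.sum_pos (fun i _ => pow_pos hr0 i) ⟨0, Finset.mem_range.2 (Nat.succ_pos K)⟩
  have hKpos : (0:ℝ) < K := by
    have : (2:ℝ) ≤ K := by exact_mod_cast hK
    linarith
  rw [lt_div_iff₀ (by positivity)]
  set T := ∑ i ∈ Finset.range (K + 1), (i : ℝ) * r ^ (K - i) with hT
  -- reflection of S0
  have hrefl0 : ∑ i ∈ Finset.range (K + 1), r ^ (K - i) = S0 := by
    rw [hS0, ← Finset.sum_range_reflect (fun i => r ^ i) (K+1)]
    simp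
  -- K * S0 = S1 + T
  have hKS0 : (K:ℝ) * S0 = S1 + T := by
    have h1 : S1 = ∑ j ∈ Finset.range (K+1), ((K - j : ℕ):ℝ) * r ^ (K - j) := by
      rw [hS1, ← Finset.sum_range_reflect (fun i => (i:ℝ) * r ^ i) (K+1)]
      simp
    have h2 : ∑ j ∈ Finset.range (K+1), ((K - j : ℕ):ℝ) * r ^ (K - j)
        = (K:ℝ) * S0 - T := by
      rw [← hrefl0, hT, Finset.mul_sum, ← Finset.sum_sub_distrib]
      apply Finset.sum_congr rfl
      intro j hj
      have hjK : j ≤ K := by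
        have := Finset.mem_range.1 hj; omega
      rw [Nat.cast_sub hjK]; ring
    rw [h1, h2]; ring
  -- key: sum of i * r^(K+1-i) < S1
  have keypos : 0 < ∑ i ∈ Finset.range (K+1), (i:ℝ) * (r ^ i - r ^ (K + 1 - i)) := by
    set g : ℕ → ℝ := fun i => (i:ℝ) * (r ^ i - r ^ (K + 1 - i)) with hg
    have e0 : ∑ i ∈ Finset.range (K+1), g i = ∑ j ∈ Finset.range K, g (j+1) := by
      rw [Finset.sum_range_succ']; simp [hg]
    have e1 : ∑ j ∈ Finset.range K, g (j+1) = ∑ j ∈ Finset.range K, g (K - j) := by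
      rw [← Finset.sum_range_reflect (fun j => g (j+1)) K]
      apply Finset.sum_congr rfl
      intro j hj
      have hjK : j < K := Finset.mem_range.1 hj
      have h : K - 1 - j + 1 = K - j := by omega
      rw [h]
    have e2 : (2:ℝ) * ∑ i ∈ Finset.range (K+1), g i
        = ∑ j ∈ Finset.range K, ((2*(j:ℝ)+1-(K:ℝ)) * (r ^ (j+1) - r ^ (K - j))) := by
      rw [e0, two_mul]
      nth_rewrite 2 [e1]
      rw [← Finset.sum_add_distrib]
      apply Finset.sum_congr rfl
      intro j hj
      have hjK : j < K := Finset.mem_range.1 hj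
      have hc : ((K - j : ℕ):ℝ) = (K:ℝ) - j := Nat.cast_sub (by omega)
      have h1 : K + 1 - (j+1) = K - j := by omega
      have h2 : K + 1 - (K - j) = j + 1 := by omega
      simp only [hg, h1, h2, hc, Nat.cast_add, Nat.cast_one]
      ring
    have each : ∀ j ∈ Finset.range K,
        0 ≤ (2*(j:ℝ)+1-(K:ℝ)) * (r ^ (j+1) - r ^ (K - j)) := by
      intro j hj
      have hjK : j < K := Finset.mem_range.1 hj
      rcases le_or_gt K (2*j+1) with h | h
      · apply mul_nonneg
        · have : (K:ℝ) ≤ 2*(j:ℝ)+1 := by exact_mod_cast h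
          linarith
        · have hle : K - j ≤ j + 1 := by omega
          have := pow_le_pow_right₀ hr1.le hle
          linarith
      · have ha : (2*(j:ℝ)+1) < K := by exact_mod_cast h
        have hle : j + 1 ≤ K - j := by omega
        have hb := pow_le_pow_right₀ hr1.le hle
        nlinarith [ha, hb]
    have last : 0 < (2*((K-1:ℕ):ℝ)+1-(K:ℝ)) * (r ^ ((K-1)+1) - r ^ (K - (K-1))) := by
      have h1 : (K-1)+1 = K := by omega
      have h2 : K - (K-1) = 1 := by omega
      have hc : ((K-1:ℕ):ℝ) = (K:ℝ) - 1 := by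
        rw [Nat.cast_sub (by omega)]; simp
      rw [h1, h2, hc]
      have hK2 : (2:ℝ) ≤ K := by exact_mod_cast hK
      have hpow : r ^ 1 < r ^ K := pow_lt_pow_right₀ hr1 (by omega)
      rw [pow_one] at hpow
      apply mul_pos (by linarith) (by linarith)
    have hsum : 0 < ∑ j ∈ Finset.range K,
        ((2*(j:ℝ)+1-(K:ℝ)) * (r ^ (j+1) - r ^ (K - j))) :=
      Finset.sum_pos' each ⟨K-1, Finset.mem_range.2 (by omega), last⟩
    rw [← e2] at hsum
    linarith
  have key : ∑ i ∈ Finset.range (K+1), (i:ℝ) * r ^ (K + 1 - i) < S1 := by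
    have h : ∑ i ∈ Finset.range (K+1), (i:ℝ) * (r ^ i - r ^ (K + 1 - i))
        = S1 - ∑ i ∈ Finset.range (K+1), (i:ℝ) * r ^ (K + 1 - i) := by
      rw [hS1, ← Finset.sum_sub_distrib]
      apply Finset.sum_congr rfl
      intro i _; ring
    rw [h] at keypos
    linarith
  have hrT : r * T = ∑ i ∈ Finset.range (K+1), (i:ℝ) * r ^ (K + 1 - i) := by
    rw [hT, Finset.mul_sum]
    apply Finset.sum_congr rfl
    intro i hi
    have hiK : i ≤ K := by
      have := Finset.mem_range.1 hi; omega
    have h : K + 1 - i = (K - i) + 1 := by omega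
    rw [h, pow_succ]; ring
  have hrTlt : r * T < S1 := by rw [hrT]; exact key
  -- x * (1 + r) = r
  have hxr : x * (1 + r) = r := by
    rw [hr]; field_simp; ring
  -- conclude
  have hxrr : (1 - x) * r = x := by rw [hr]; field_simp
  have hxT : x * T = (1 - x) * (r * T) := by linear_combination T * hxrr.symm
  have hfin : x * T < (1 - x) * S1 := by
    rw [hxT]
    exact (mul_lt_mul_iff_right₀ h1x).2 hrTlt
  nlinarith [hKS0, hfin]
end

section
/- Let K >= 2 and let rho_0,...,rho_K be nonnegative reals summing to 1 with magnetization m = (1/K) * sum i * rho_i, where 0 < m < 1. If rho_{i+1}/rho_i = m/(1-m) for all i = 0,...,K-1 (all rho_i > 0), then m = 1/2 and rho_i = 1/(K+1) for all i. -/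
lemma tele_aux (r : ℝ) (K : ℕ) :
    (r - 1) * (∑ i ∈ Finset.range (K + 1), (i : ℝ) * r ^ i)
      + r * (∑ i ∈ Finset.range (K + 1), r ^ i)
    = ((K : ℝ) + 1) * r ^ (K + 1) := by
  induction K with
  | zero => simp
  | succ n ih =>
    rw [Finset.sum_range_succ, Finset.sum_range_succ (f := fun i => r ^ i)]
    push_cast
    push_cast at ih
    linear_combination ih

lemma key_id (r : ℝ) (K : ℕ) :
    (1 + r) * (∑ i ∈ Finset.range (K + 1), (i : ℝ) * r ^ i)
      - (K : ℝ) * r * (∑ i ∈ Finset.range (K + 1), r ^ i)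
    = (r - 1) * ∑ j ∈ Finset.range K, (j : ℝ) * ((K : ℝ) - j) * r ^ j := by
  induction K with
  | zero => simp
  | succ n ih =>
    have h1 := tele_aux r n
    have hsplit : ∑ j ∈ Finset.range (n + 1), (j : ℝ) * (((n : ℝ) + 1) - j) * r ^ j
        = (∑ j ∈ Finset.range n, (j : ℝ) * ((n : ℝ) - j) * r ^ j)
          + ∑ j ∈ Finset.range (n + 1), (j : ℝ) * r ^ j := by
      have heq : ∀ j : ℕ, (j : ℝ) * (((n : ℝ) + 1) - j) * r ^ j
          = (j : ℝ) * ((n : ℝ) - j) * r ^ j + (j : ℝ) * r ^ j := by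
        intro j; ring
      simp_rw [heq]
      rw [Finset.sum_add_distrib,
        Finset.sum_range_succ (f := fun j => (j : ℝ) * ((n : ℝ) - j) * r ^ j)]
      ring
    rw [Finset.sum_range_succ (f := fun i => (i : ℝ) * r ^ i),
      Finset.sum_range_succ (f := fun i => r ^ i)]
    push_cast
    rw [hsplit]
    linear_combination ih - h1

theorem interior_steady_state_is_uniform (K : ℕ) (hK : 2 ≤ K) (ρ : ℕ → ℝ)
    (hpos : ∀ i ≤ K, 0 < ρ i)
    (hsum : ∑ i ∈ Finset.range (K + 1), ρ i = 1)
    (m : ℝ) (hm : m = (1 / (K : ℝ)) * ∑ i ∈ Finset.range (K + 1), (i : ℝ) * ρ i)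
    (hm0 : 0 < m) (hm1 : m < 1)
    (hgeo : ∀ i < K, ρ (i + 1) / ρ i = m / (1 - m)) :
    m = 1 / 2 ∧ ∀ i ≤ K, ρ i = 1 / (K + 1) := by
  set r : ℝ := m / (1 - m) with hrdef
  have h1m : (0:ℝ) < 1 - m := by linarith
  have hr0 : 0 < r := div_pos hm0 h1m
  have hstep : ∀ i < K, ρ (i + 1) = r * ρ i := by
    intro i hi
    have h := hgeo i hi
    rwa [div_eq_iff (ne_of_gt (hpos i hi.le))] at h
  have hpow : ∀ i ≤ K, ρ i = ρ 0 * r ^ i := by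
    intro i
    induction i with
    | zero => simp
    | succ n ih =>
      intro h
      rw [hstep n (by omega), ih (by omega), pow_succ]
      ring
  have hKne : (K : ℝ) ≠ 0 := by positivity
  have hB : ρ 0 * (∑ i ∈ Finset.range (K + 1), r ^ i) = 1 := by
    rw [← hsum, Finset.mul_sum]
    refine (Finset.sum_congr rfl fun i hi => ?_).symm
    rw [hpow i (Nat.lt_succ_iff.mp (Finset.mem_range.mp hi))]
  have hA : ∑ i ∈ Finset.range (K + 1), (i : ℝ) * ρ i
      = ρ 0 * ∑ i ∈ Finset.range (K + 1), (i : ℝ) * r ^ i := by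
    rw [Finset.mul_sum]
    refine Finset.sum_congr rfl fun i hi => ?_
    rw [hpow i (Nat.lt_succ_iff.mp (Finset.mem_range.mp hi))]
    ring
  have hKm : (K : ℝ) * m = ρ 0 * ∑ i ∈ Finset.range (K + 1), (i : ℝ) * r ^ i := by
    rw [← hA, hm]
    field_simp
  have hmr : m * (1 + r) = r := by
    rw [hrdef]
    field_simp
    ring
  -- derive (1+r)*A - K*r*B = 0
  have hzero : (1 + r) * (∑ i ∈ Finset.range (K + 1), (i : ℝ) * r ^ i)
      - (K : ℝ) * r * (∑ i ∈ Finset.range (K + 1), r ^ i) = 0 := by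
    have hρ0 : ρ 0 ≠ 0 := ne_of_gt (hpos 0 (by omega))
    have hmul : ρ 0 * ((1 + r) * (∑ i ∈ Finset.range (K + 1), (i : ℝ) * r ^ i)
        - (K : ℝ) * r * (∑ i ∈ Finset.range (K + 1), r ^ i)) = 0 := by
      have : ρ 0 * ((1 + r) * (∑ i ∈ Finset.range (K + 1), (i : ℝ) * r ^ i))
          = (1 + r) * ((K : ℝ) * m) := by rw [hKm]; ring
      have h2 : ρ 0 * ((K : ℝ) * r * (∑ i ∈ Finset.range (K + 1), r ^ i))
          = (K : ℝ) * r := by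
        rw [show ρ 0 * ((K : ℝ) * r * (∑ i ∈ Finset.range (K + 1), r ^ i))
            = (K : ℝ) * r * (ρ 0 * (∑ i ∈ Finset.range (K + 1), r ^ i)) by ring, hB]
        ring
      rw [mul_sub, this, h2]
      linear_combination (K : ℝ) * hmr
    rcases mul_eq_zero.mp hmul with h | h
    · exact absurd h hρ0
    · exact h
  have hC : 0 < ∑ j ∈ Finset.range K, (j : ℝ) * ((K : ℝ) - j) * r ^ j := by
    apply Finset.sum_pos'
    · intro j hj
      have hjK : j < K := Finset.mem_range.mp hj
      have : (j : ℝ) ≤ (K : ℝ) := by exact_mod_cast hjK.le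
      have h1 : (0:ℝ) ≤ (K : ℝ) - j := by linarith
      positivity
    · refine ⟨1, Finset.mem_range.mpr (by omega), ?_⟩
      have h2K : (2:ℝ) ≤ (K : ℝ) := by exact_mod_cast hK
      have : (0:ℝ) < (K : ℝ) - 1 := by linarith
      have := mul_pos this (pow_pos hr0 1)
      push_cast
      nlinarith
  have hr1 : r = 1 := by
    have := key_id r K
    rw [hzero] at this
    have h0 : (r - 1) * ∑ j ∈ Finset.range K, (j : ℝ) * ((K : ℝ) - j) * r ^ j = 0 := this.symm
    rcases mul_eq_zero.mp h0 with h | h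
    · linarith
    · exact absurd h (ne_of_gt hC)
  have hm12 : m = 1 / 2 := by
    have : m = 1 - m := by
      have := hr1
      rw [hrdef, div_eq_one_iff_eq (ne_of_gt h1m)] at this
      exact this
    linarith
  refine ⟨hm12, fun i hi => ?_⟩
  have hB' : ρ 0 * ((K : ℝ) + 1) = 1 := by
    have := hB
    rw [hr1] at this
    simpa using this
  have hρ0 : ρ 0 = 1 / ((K : ℝ) + 1) := by
    have hK1 : ((K : ℝ) + 1) ≠ 0 := by positivity
    field_simp at hB' ⊢
    linarith
  rw [hpow i hi, hr1, one_pow, mul_one, hρ0]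
end

section
/- Let K >= 2, 1/2 < x < 1, r = x/(1-x). Extend the geometric distribution from K+1 states to K+2 states by appending rho_{K+1} = rho_K * r. If m_old denotes the magnetization of the K+1-state distribution and m_new that of the K+2-state distribution, and m_old >= x, then m_new > m_old. -/
/-- Auxiliary AM-GM style lemma: `r^a + r^(a+2d) ≥ 2 r^(a+d)`. -/
lemma pair_pow_ineq (r : ℝ) (hr : 0 < r) (a d : ℕ) :
    2 * r ^ (a + d) ≤ r ^ a + r ^ (a + d + d) := by
  have h : r ^ a + r ^ (a + d + d) - 2 * r ^ (a + d) = r ^ a * (1 - r ^ d) ^ 2 := by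
    simp only [pow_add]; ring
  nlinarith [mul_nonneg (pow_pos hr a).le (sq_nonneg (1 - r ^ d))]

/-- Key estimate: `(K+1)^2 r^K < S^2` where `S = ∑_{i≤K} r^i`, for `r > 1`, `K ≥ 1`. -/
lemma geom_sum_sq_gt (r : ℝ) (hr : 1 < r) (K : ℕ) (hK : 1 ≤ K) :
    ((K : ℝ) + 1) ^ 2 * r ^ K < (∑ i ∈ Finset.range (K + 1), r ^ i) ^ 2 := by
  have hr0 : 0 < r := lt_trans one_pos hr
  set S : ℝ := ∑ i ∈ Finset.range (K + 1), r ^ i with hSdef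
  have hrefl : ∑ i ∈ Finset.range (K + 1), r ^ (K - i) = S := by
    have := Finset.sum_range_reflect (fun i => r ^ i) (K + 1)
    simpa using this
  set F : ℕ × ℕ → ℝ := fun p => r ^ (p.1 + p.2) + r ^ ((K - p.1) + (K - p.2)) - 2 * r ^ K
    with hF
  set A : Finset (ℕ × ℕ) := Finset.range (K + 1) ×ˢ Finset.range (K + 1) with hA
  have h1 : ∑ p ∈ A, r ^ (p.1 + p.2) = S * S := by
    rw [hA, Finset.sum_product]
    rw [hSdef, Finset.sum_mul_sum]
    simp [pow_add]
  have h2 : ∑ p ∈ A, r ^ ((K - p.1) + (K - p.2)) = S * S := by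
    rw [show S * S = (∑ i ∈ Finset.range (K + 1), r ^ (K - i)) *
        (∑ j ∈ Finset.range (K + 1), r ^ (K - j)) from by rw [hrefl]]
    rw [hA, Finset.sum_product, Finset.sum_mul_sum]
    simp [pow_add]
  have hcard : (A.card : ℝ) = ((K : ℝ) + 1) ^ 2 := by
    rw [hA, Finset.card_product, Finset.card_range]
    push_cast; ring
  have hsum : ∑ p ∈ A, F p = 2 * (S * S) - ((K : ℝ) + 1) ^ 2 * (2 * r ^ K) := by
    rw [hF]
    rw [show (fun p : ℕ × ℕ => r ^ (p.1 + p.2) + r ^ ((K - p.1) + (K - p.2)) - 2 * r ^ K)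
        = fun p : ℕ × ℕ => (r ^ (p.1 + p.2) + r ^ ((K - p.1) + (K - p.2))) - 2 * r ^ K
        from rfl]
    rw [Finset.sum_sub_distrib, Finset.sum_add_distrib, h1, h2, Finset.sum_const,
      nsmul_eq_mul, hcard]
    ring
  have hnonneg : ∀ p ∈ A, 0 ≤ F p := by
    rintro ⟨i, j⟩ hp
    rw [hA, Finset.mem_product, Finset.mem_range, Finset.mem_range] at hp
    obtain ⟨hi, hj⟩ := hp
    have hi' : i ≤ K := Nat.lt_succ_iff.mp hi
    have hj' : j ≤ K := Nat.lt_succ_iff.mp hj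
    rw [hF]
    simp only
    rcases le_or_gt (i + j) K with hm | hm
    · have h := pair_pow_ineq r hr0 (i + j) (K - (i + j))
      have ea : (i + j) + (K - (i + j)) = K := by omega
      rw [ea] at h
      have eb : K + (K - (i + j)) = (K - i) + (K - j) := by omega
      rw [eb] at h
      linarith
    · have h := pair_pow_ineq r hr0 ((K - i) + (K - j)) ((i + j) - K)
      have ea : ((K - i) + (K - j)) + ((i + j) - K) = K := by omega
      rw [ea] at h
      have eb : K + ((i + j) - K) = i + j := by omega
      rw [eb] at h
      linarith
  have hmem : ((0, 0) : ℕ × ℕ) ∈ A := by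
    rw [hA, Finset.mem_product]
    simp
  have h00 : 0 < F (0, 0) := by
    rw [hF]
    simp only [Nat.add_zero, Nat.sub_zero, pow_zero]
    have hpK : 1 < r ^ K := one_lt_pow₀ hr (by omega)
    have : r ^ (K + K) = r ^ K * r ^ K := by rw [pow_add]
    nlinarith [sq_nonneg (r ^ K - 1)]
  have hle : F (0, 0) ≤ ∑ p ∈ A, F p := Finset.single_le_sum hnonneg hmem
  nlinarith [hsum, h00, hle]

/-- Closed form of `∑ i r^i`. -/
lemma weighted_geom_sum_form (r : ℝ) : ∀ n : ℕ,
    (r - 1) ^ 2 * ∑ i ∈ Finset.range n, (i : ℝ) * r ^ i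
      = ((n : ℝ) - 1) * r ^ (n + 1) - (n : ℝ) * r ^ n + r := by
  intro n
  induction n with
  | zero => simp
  | succ n ih =>
    rw [Finset.sum_range_succ, mul_add, ih]
    push_cast
    ring

set_option maxHeartbeats 1000000 in
theorem magnetization_increases_on_extension (K : ℕ) (hK : 2 ≤ K)
    (x r : ℝ) (hx : 1 / 2 < x) (hx1 : x < 1) (hr : r = x / (1 - x))
    (m_old m_new : ℝ)
    (hold : m_old = (∑ i ∈ Finset.range (K + 1), (i : ℝ) * r ^ i) /
        ((K : ℝ) * ∑ i ∈ Finset.range (K + 1), r ^ i))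
    (hnew : m_new = (∑ i ∈ Finset.range (K + 2), (i : ℝ) * r ^ i) /
        (((K : ℝ) + 1) * ∑ i ∈ Finset.range (K + 2), r ^ i))
    (hge : x ≤ m_old) :
    m_old < m_new := by
  have hx0 : 0 < 1 - x := by linarith
  have hr1 : 1 < r := by
    rw [hr, lt_div_iff₀ hx0]; linarith
  have hr0 : 0 < r := lt_trans one_pos hr1
  set S : ℝ := ∑ i ∈ Finset.range (K + 1), r ^ i with hSdef
  set T : ℝ := ∑ i ∈ Finset.range (K + 1), (i : ℝ) * r ^ i with hTdef
  set c : ℝ := (K : ℝ) with hcdef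
  have hc2 : 2 ≤ c := by rw [hcdef]; exact_mod_cast hK
  set P : ℝ := r ^ (K + 1) with hPdef
  have hP0 : 0 < P := pow_pos hr0 _
  have hS0 : 0 < S := Finset.sum_pos (fun i _ => pow_pos hr0 i) (by simp)
  -- new sums
  have hSnew : ∑ i ∈ Finset.range (K + 2), r ^ i = S + P := by
    rw [Finset.sum_range_succ]
  have hTnew : ∑ i ∈ Finset.range (K + 2), (i : ℝ) * r ^ i = T + (c + 1) * P := by
    rw [Finset.sum_range_succ, hcdef]
    push_cast
    ring
  -- closed forms
  have e1 : (r - 1) * S = P - 1 := by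
    rw [hSdef, hPdef, mul_comm]
    exact geom_sum_mul r (K + 1)
  have e2 : (r - 1) ^ 2 * T = c * r * P - (c + 1) * P + r := by
    have := weighted_geom_sum_form r (K + 1)
    rw [← hTdef] at this
    rw [this, hcdef, hPdef]
    push_cast
    ring
  -- key quadratic estimate
  have hkey2 : (c + 1) ^ 2 * r ^ K < S ^ 2 := by
    rw [hcdef, hSdef]
    exact geom_sum_sq_gt r hr1 K (by omega)
  -- main inequality : S*T < (c+1) * P * (c*S - T)
  have hr1' : (0 : ℝ) < r - 1 := by linarith
  set E : ℝ := c * r * P - (c + 1) * P + r with hEdef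
  have l1 : (r - 1) ^ 3 * (S * T) = (P - 1) * E := by
    linear_combination ((r - 1) ^ 2 * T) * e1 + (P - 1) * e2
  have r1 : (r - 1) ^ 3 * ((c + 1) * P * (c * S - T))
      = (c + 1) * P * (c * (r - 1) ^ 2 * (P - 1) - (r - 1) * E) := by
    linear_combination (c * (c + 1) * P * (r - 1) ^ 2) * e1 + (-(c + 1) * P * (r - 1)) * e2
  have hfact : (c + 1) * P * (c * (r - 1) ^ 2 * (P - 1) - (r - 1) * E) - (P - 1) * E
      = r * (P - 1) ^ 2 - (c + 1) ^ 2 * P * (r - 1) ^ 2 := by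
    rw [hEdef]; ring
  have hGpos : 0 < r * (P - 1) ^ 2 - (c + 1) ^ 2 * P * (r - 1) ^ 2 := by
    have hPS : (P - 1) ^ 2 = (r - 1) ^ 2 * S ^ 2 := by
      rw [← e1]; ring
    have hPr : P = r * r ^ K := by rw [hPdef, pow_succ]; ring
    rw [hPS, hPr]
    have : r * ((r - 1) ^ 2 * S ^ 2) - (c + 1) ^ 2 * (r * r ^ K) * (r - 1) ^ 2
        = r * (r - 1) ^ 2 * (S ^ 2 - (c + 1) ^ 2 * r ^ K) := by ring
    rw [this]
    apply mul_pos (mul_pos hr0 (by positivity))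
    linarith
  have hkey : S * T < (c + 1) * P * (c * S - T) := by
    have h3 : (r - 1) ^ 3 * (S * T) < (r - 1) ^ 3 * ((c + 1) * P * (c * S - T)) := by
      rw [l1, r1]; linarith
    have hcube : (0 : ℝ) < (r - 1) ^ 3 := by positivity
    exact lt_of_mul_lt_mul_left h3 hcube.le
  -- conclude
  have hT0 : 0 ≤ T :=
    Finset.sum_nonneg fun i _ => mul_nonneg (Nat.cast_nonneg i) (pow_pos hr0 i).le
  have hc0 : 0 < c := by linarith
  have hd1 : 0 < c * S := mul_pos hc0 hS0
  have hd2 : 0 < (c + 1) * (S + P) := mul_pos (by linarith) (by linarith)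
  rw [hold, hnew, hSnew, hTnew]
  rw [div_lt_div_iff₀ hd1 hd2]
  have expand : (T + (c + 1) * P) * (c * S) - T * ((c + 1) * (S + P))
      = (c + 1) * P * (c * S - T) - S * T := by ring
  linarith [hkey]
end

section
/- Define, for K >= 2 and m in (1/2, 1) with r = m/(1-m), m_normal(m) = (sum_{i=0}^{K} i*r^i)/(K*sum_{i=0}^{K} r^i) and rho_B(m) = (m_normal(m) - m)/m_normal(m). Then rho_B(m) > 0 for all m in (1/2, 1), and rho_B(m) tends to 0 as m tends to 1 from below. -/
open Finset Filter

theorem zealot_density_positive_and_vanishes (K : ℕ) (hK : 2 ≤ K)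
    (m_normal ρB : ℝ → ℝ)
    (hmn : ∀ m, m_normal m =
        (∑ i ∈ Finset.range (K + 1), (i : ℝ) * (m / (1 - m)) ^ i) /
          ((K : ℝ) * ∑ i ∈ Finset.range (K + 1), (m / (1 - m)) ^ i))
    (hρB : ∀ m, ρB m = (m_normal m - m) / m_normal m) :
    (∀ m ∈ Set.Ioo (1 / 2 : ℝ) 1, 0 < ρB m) ∧
      Filter.Tendsto ρB (nhdsWithin 1 (Set.Iio 1)) (nhds 0) := by
  have hKR : (0:ℝ) < K := by positivity
  -- Key polynomial identity
  have key : ∀ r : ℝ,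
      (1+r) * (∑ i ∈ range (K+1), (i:ℝ) * r^i)
        - (K:ℝ) * r * (∑ i ∈ range (K+1), r^i)
      = (r-1) * ∑ i ∈ range (K+1), (i:ℝ) * ((K:ℝ) - i) * r^i := by
    intro r
    set f : ℕ → ℝ := fun j => (j:ℝ) * ((K:ℝ) + 1 - j) * r^j with hf
    have h1 : (1+r) * (∑ i ∈ range (K+1), (i:ℝ) * r^i)
        - (K:ℝ) * r * (∑ i ∈ range (K+1), r^i)
        - (r-1) * ∑ i ∈ range (K+1), (i:ℝ) * ((K:ℝ) - i) * r^i
        = ∑ i ∈ range (K+1), (f i - f (i+1)) := by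
      rw [Finset.mul_sum, Finset.mul_sum, Finset.mul_sum, ← Finset.sum_sub_distrib,
        ← Finset.sum_sub_distrib]
      refine Finset.sum_congr rfl fun i _ => ?_
      simp only [hf]
      push_cast
      ring
    have h2 : ∑ i ∈ range (K+1), (f i - f (i+1)) = f 0 - f (K+1) :=
      Finset.sum_range_sub' f (K+1)
    have h3 : f 0 = 0 := by simp [hf]
    have h4 : f (K+1) = 0 := by
      simp only [hf]
      push_cast
      ring
    rw [h2, h3, h4] at h1
    linarith
  -- Positivity part
  have pos : ∀ m ∈ Set.Ioo (1 / 2 : ℝ) 1, 0 < ρB m := by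
    rintro m ⟨hm0, hm1⟩
    have hmpos : 0 < m := by linarith
    have h1m : 0 < 1 - m := by linarith
    set r := m / (1 - m) with hr
    have hr1 : 1 < r := (one_lt_div h1m).mpr (by linarith)
    have hrpos : 0 < r := by linarith
    set S0 := ∑ i ∈ range (K+1), r^i with hS0
    set S1 := ∑ i ∈ range (K+1), (i:ℝ) * r^i with hS1
    have hS0pos : 0 < S0 :=
      Finset.sum_pos (fun i _ => pow_pos hrpos i) (by simp)
    have hS1pos : 0 < S1 := by
      refine Finset.sum_pos' (fun i _ => by positivity) ⟨1, ?_, ?_⟩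
      · simp; omega
      · simpa using pow_pos hrpos 1
    have hTpos : 0 < ∑ i ∈ range (K+1), (i:ℝ) * ((K:ℝ) - i) * r^i := by
      refine Finset.sum_pos' (fun i hi => ?_) ⟨1, ?_, ?_⟩
      · have hik : i ≤ K := by simpa [Nat.lt_succ_iff] using hi
        have hik' : (i:ℝ) ≤ K := by exact_mod_cast hik
        exact mul_nonneg (mul_nonneg (by positivity) (by linarith))
          (le_of_lt (pow_pos hrpos i))
      · exact Finset.mem_range.mpr (by omega)
      · have : (1:ℝ) ≤ (K:ℝ) - 1 := by
          have : (2:ℝ) ≤ K := by exact_mod_cast hK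
          linarith
        have hp := pow_pos hrpos 1
        simp only [Nat.cast_one]
        nlinarith
    have hkey := key r
    have hgt : (K:ℝ) * r * S0 < (1+r) * S1 := by nlinarith
    have h1m' : (1:ℝ) - m ≠ 0 := ne_of_gt h1m
    have hmr : m * (1 + r) = r := by
      rw [hr]; field_simp; ring
    -- S1 > m * (K * S0)
    have hS1gt : m * ((K:ℝ) * S0) < S1 := by nlinarith
    have hmn_val : m_normal m = S1 / ((K:ℝ) * S0) := hmn m
    have hKS0 : 0 < (K:ℝ) * S0 := by positivity
    have hmnm : m < m_normal m := by
      rw [hmn_val, lt_div_iff₀ hKS0]; linarith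
    have hmnpos : 0 < m_normal m := lt_trans hmpos hmnm
    rw [hρB]
    exact div_pos (by linarith) hmnpos
  refine ⟨pos, ?_⟩
  -- Limit part
  set num : ℝ → ℝ := fun m => ∑ i ∈ range (K+1), (i:ℝ) * m^i * (1-m)^(K-i) with hnumdef
  set den : ℝ → ℝ := fun m => ∑ i ∈ range (K+1), m^i * (1-m)^(K-i) with hdendef
  have heq : ∀ m : ℝ, m ≠ 1 → m_normal m = num m / ((K:ℝ) * den m) := by
    intro m hm
    have h1m : (1:ℝ) - m ≠ 0 := sub_ne_zero.mpr (Ne.symm hm)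
    have hc : ((1:ℝ)-m)^K ≠ 0 := pow_ne_zero _ h1m
    rw [hmn]
    rw [← mul_div_mul_right _ ((K:ℝ) * ∑ i ∈ range (K+1), (m/(1-m))^i) hc]
    congr 1
    · rw [Finset.sum_mul]
      refine Finset.sum_congr rfl fun i hi => ?_
      have hik : i ≤ K := by simpa [Nat.lt_succ_iff] using hi
      have hKsplit : ((1:ℝ)-m)^K = (1-m)^i * (1-m)^(K-i) := by
        rw [← pow_add]; congr 1; omega
      rw [div_pow, hKsplit]
      have hi0 : ((1:ℝ)-m)^i ≠ 0 := pow_ne_zero _ h1m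
      field_simp
    · rw [mul_assoc]
      congr 1
      rw [Finset.sum_mul]
      refine Finset.sum_congr rfl fun i hi => ?_
      have hik : i ≤ K := by simpa [Nat.lt_succ_iff] using hi
      have hKsplit : ((1:ℝ)-m)^K = (1-m)^i * (1-m)^(K-i) := by
        rw [← pow_add]; congr 1; omega
      rw [div_pow, hKsplit]
      have hi0 : ((1:ℝ)-m)^i ≠ 0 := pow_ne_zero _ h1m
      field_simp
  have hnumc : Continuous num := by
    refine continuous_finset_sum _ fun i _ => ?_
    fun_prop
  have hdenc : Continuous den := by
    refine continuous_finset_sum _ fun i _ => ?_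
    fun_prop
  have hnum1 : num 1 = K := by
    simp only [hnumdef]
    rw [Finset.sum_range_succ]
    have : ∑ i ∈ range K, (i:ℝ) * (1:ℝ)^i * (1-1)^(K-i) = 0 := by
      refine Finset.sum_eq_zero fun i hi => ?_
      have : K - i ≠ 0 := by simp at hi; omega
      rw [sub_self, zero_pow this, mul_zero]
    rw [this, zero_add, Nat.sub_self, pow_zero, one_pow]
    ring
  have hden1 : den 1 = 1 := by
    simp only [hdendef]
    rw [Finset.sum_range_succ]
    have : ∑ i ∈ range K, (1:ℝ)^i * (1-1)^(K-i) = 0 := by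
      refine Finset.sum_eq_zero fun i hi => ?_
      have : K - i ≠ 0 := by simp at hi; omega
      rw [sub_self, zero_pow this, mul_zero]
    rw [this, zero_add, Nat.sub_self, pow_zero, one_pow]
    norm_num
  have hG : Tendsto (fun m => num m / ((K:ℝ) * den m)) (nhds 1) (nhds 1) := by
    have h := (hnumc.tendsto 1).div (Continuous.tendsto (f := fun m => (K:ℝ) * den m) (continuous_const.mul hdenc) 1)
      (by rw [hden1, mul_one]; exact hKR.ne')
    rw [hnum1, hden1] at h
    simpa [Pi.div_def, div_self hKR.ne'] using h
  have hG2 : Tendsto (fun m => ((num m / ((K:ℝ) * den m)) - m) / (num m / ((K:ℝ) * den m)))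
      (nhds 1) (nhds 0) := by
    have hid : Tendsto (fun x : ℝ => x) (nhds (1:ℝ)) (nhds 1) := tendsto_id
    have h := ((hG.sub hid).div hG one_ne_zero)
    simpa [Pi.div_def] using h
  have hG3 := hG2.mono_left (nhdsWithin_le_nhds (s := Set.Iio (1:ℝ)))
  refine hG3.congr' ?_
  filter_upwards [self_mem_nhdsWithin] with m hm
  have hm1 : m ≠ 1 := ne_of_lt hm
  rw [hρB, heq m hm1]
end

section
/- Let r > 1, m in (0,1) with m/(1-m) > r, N a positive integer, and rho_0 > 0 with rho_1 = r*rho_0 and rho_2 >= r^2*rho_0. Then (rho_1*((N-1)/N) + rho_0*(m/N) + rho_2*((1-m)/N)) / (rho_0*((N-m)/N) + rho_1*((1-m)/N)) > r. -/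
theorem boundary_ratio_increases_left (r m : ℝ) (hr : 1 < r)
    (hm0 : 0 < m) (hm1 : m < 1) (hrm : r < m / (1 - m))
    (N : ℕ) (hN : 0 < N)
    (ρ0 ρ1 ρ2 : ℝ) (hρ0 : 0 < ρ0)
    (h1 : ρ1 = r * ρ0) (h2 : r ^ 2 * ρ0 ≤ ρ2) :
    r < (ρ1 * (((N : ℝ) - 1) / N) + ρ0 * (m / N) + ρ2 * ((1 - m) / N)) /
        (ρ0 * (((N : ℝ) - m) / N) + ρ1 * ((1 - m) / N)) := by
  have hNpos : (0 : ℝ) < N := by exact_mod_cast hN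
  have hN1 : (1 : ℝ) ≤ N := by exact_mod_cast hN
  have h1m : (0:ℝ) < 1 - m := by linarith
  have hrm' : r * (1 - m) < m := (lt_div_iff₀ h1m).mp hrm
  subst h1
  have hB : 0 < ρ0 * (((N : ℝ) - m) / N) + r * ρ0 * ((1 - m) / N) := by
    apply add_pos
    · exact mul_pos hρ0 (div_pos (by linarith) hNpos)
    · exact mul_pos (mul_pos (by linarith) hρ0) (div_pos h1m hNpos)
  rw [lt_div_iff₀ hB]
  have hNne : (N:ℝ) ≠ 0 := ne_of_gt hNpos
  rw [show r * (ρ0 * (((N:ℝ) - m) / N) + r * ρ0 * ((1 - m) / N)) =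
      (r * (ρ0 * ((N:ℝ) - m) + r * ρ0 * (1 - m))) / N from by ring,
    show r * ρ0 * (((N:ℝ) - 1) / N) + ρ0 * (m / N) + ρ2 * ((1 - m) / N) =
      (r * ρ0 * ((N:ℝ) - 1) + ρ0 * m + ρ2 * (1 - m)) / N from by ring,
    div_lt_div_iff₀ hNpos hNpos]
  have h3 : r ^ 2 * ρ0 * (1 - m) ≤ ρ2 * (1 - m) :=
    mul_le_mul_of_nonneg_right h2 (le_of_lt h1m)
  have hpos : 0 < ρ0 * (m - r * (1 - m)) := mul_pos hρ0 (by linarith)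
  nlinarith [mul_pos hNpos hpos, mul_le_mul_of_nonneg_right h3 (le_of_lt hNpos)]
end
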